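/- For all strings u, v over the two-letter alphabet {⟨, ⟩}: (opening parenthesis) if r(u) < l(v) then l(u ∘ ⟨ ∘ v) = l(u ∘ v) − 1 and r(u ∘ ⟨ ∘ v) = r(u ∘ v), while if r(u) ≥ l(v) then l(u ∘ ⟨ ∘ v) = l(u ∘ v) and r(u ∘ ⟨ ∘ v) = r(u ∘ v) + 1; (closing parenthesis) if r(u) ≤ l(v) then l(u ∘ ⟩ ∘ v) = l(u ∘ v) + 1 and r(u ∘ ⟩ ∘ v) = r(u ∘ v), while if r(u) > l(v) then l(u ∘ ⟩ ∘ v) = l(u ∘ v) and r(u ∘ ⟩ ∘ v) = r(u ∘ v) − 1. -/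

import Mathlib

/- Strings over the parenthesis alphabet `{⟨, ⟩}` are modeled as `List Bool`,
with `true` standing for the opening parenthesis `⟨` and `false` for the
closing parenthesis `⟩`. -/

/-- `lval S` is the number of unmatched closing parentheses of `S`:
the maximum over all prefixes `p` of `S` of `max(#⟩(p) − #⟨(p), 0)`
(truncated natural subtraction realizes the inner `max(·,0)`). -/
def lval (S : List Bool) : ℕ :=
  (S.inits.map fun p => p.count false - p.count true).foldr max 0

/-- `rval S` is the number of unmatched opening parentheses of `S`:
the maximum over all suffixes `s` of `S` of `max(#⟨(s) − #⟩(s), 0)`. -/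
def rval (S : List Bool) : ℕ :=
  (S.tails.map fun s => s.count true - s.count false).foldr max 0



lemma foldr_max_map_add (l : List ℤ) (b c : ℤ) :
    (l.map (· + c)).foldr max (b + c) = l.foldr max b + c := by
  induction l with
  | nil => simp
  | cons a t ih => simp only [List.map_cons, List.foldr_cons, ih]; omega

lemma foldr_max_base (l : List ℤ) {b b' : ℤ} (h : b ≤ b') :
    l.foldr max b' = max b' (l.foldr max b) := by
  induction l with
  | nil => simp [h]
  | cons a t ih => simp only [List.foldr_cons, ih]; omega

lemma le_foldr_max (l : List ℤ) (b : ℤ) : b ≤ l.foldr max b := by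
  induction l with
  | nil => simp
  | cons a t ih => simp only [List.foldr_cons]; omega

def Lz (S : List Bool) : ℤ := (S.inits.map fun p => (p.count false : ℤ) - p.count true).foldr max 0
def Rz (S : List Bool) : ℤ := (S.tails.map fun s => (s.count true : ℤ) - s.count false).foldr max 0

lemma Lz_nonneg (S : List Bool) : 0 ≤ Lz S := le_foldr_max _ _
lemma Rz_nonneg (S : List Bool) : 0 ≤ Rz S := le_foldr_max _ _

lemma vals_head (S : List Bool) :
    ∃ rest, (S.inits.map fun p => (p.count false : ℤ) - p.count true) = 0 :: rest := by
  cases S with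
  | nil => exact ⟨[], by simp [List.inits]⟩
  | cons a t =>
    refine ⟨(t.inits.map fun p => a :: p).map fun p => (p.count false : ℤ) - p.count true, ?_⟩
    rw [List.inits_cons, List.map_cons]; norm_num

lemma foldr_neg_base (S : List Bool) :
    (S.inits.map fun p => (p.count false : ℤ) - p.count true).foldr max (-1) = Lz S := by
  obtain ⟨rest, h⟩ := vals_head S
  unfold Lz
  rw [h, List.foldr_cons, List.foldr_cons,
    foldr_max_base rest (show (-1:ℤ) ≤ 0 by norm_num)]
  omega

lemma Lz_cons (x : Bool) (S : List Bool) :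
    Lz (x :: S) = max 0 (Lz S + if x then -1 else 1) := by
  have key : ∀ c : ℤ, (S.inits.map fun p => ((p.count false : ℤ) - p.count true) + c).foldr max 0
      = (S.inits.map fun p => (p.count false : ℤ) - p.count true).foldr max (-c) + c := by
    intro c
    have := foldr_max_map_add (S.inits.map fun p => (p.count false : ℤ) - p.count true) (-c) c
    rw [List.map_map] at this
    simpa [Function.comp_def] using this
  unfold Lz
  rw [List.inits_cons, List.map_cons, List.map_map]
  cases x
  · have h1 : ((fun p => ((p.count false : ℤ)) - p.count true) ∘ fun t => false :: t)
        = fun p => ((p.count false : ℤ) - p.count true) + 1 := by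
      funext p; simp [List.count_cons]; omega
    rw [h1, List.foldr_cons, key 1, show -(1:ℤ) = -1 from rfl, foldr_neg_base]
    have := Lz_nonneg S
    unfold Lz at this ⊢
    norm_num
  · have h1 : ((fun p => ((p.count false : ℤ)) - p.count true) ∘ fun t => true :: t)
        = fun p => ((p.count false : ℤ) - p.count true) + (-1) := by
      funext p; simp [List.count_cons]; omega
    rw [h1, List.foldr_cons, key (-1), show -(-1:ℤ) = 1 from rfl,
      foldr_max_base _ (show (0:ℤ) ≤ 1 by norm_num)]
    norm_num
    omega

lemma Rz_cons (x : Bool) (S : List Bool) :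
    Rz (x :: S) = max ((((x :: S).count true : ℤ)) - (x :: S).count false) (Rz S) := by
  unfold Rz
  rw [List.tails_cons, List.map_cons, List.foldr_cons]

lemma Lz_nil : Lz [] = 0 := by simp [Lz, List.inits]
lemma Rz_nil : Rz [] = 0 := by simp [Rz, List.tails]

lemma delta_le_Rz (S : List Bool) : ((S.count true : ℤ)) - S.count false ≤ Rz S := by
  cases S with
  | nil => simp [Rz_nil]
  | cons a t => rw [Rz_cons]; exact le_max_left _ _

lemma Lz_append (u v : List Bool) :
    Lz (u ++ v) = max (Lz u) (Lz v + ((u.count false : ℤ) - u.count true)) := by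
  induction u with
  | nil =>
    simp only [List.nil_append, List.count_nil, Lz_nil]
    have := Lz_nonneg v; omega
  | cons x u ih =>
    rw [List.cons_append, Lz_cons, Lz_cons, ih]
    have h1 := Lz_nonneg u
    have h2 := Lz_nonneg v
    cases x <;> simp [List.count_cons] <;> omega

lemma Rz_append (u v : List Bool) :
    Rz (u ++ v) = max (Rz v) (Rz u + ((v.count true : ℤ) - v.count false)) := by
  induction u with
  | nil =>
    simp only [List.nil_append, Rz_nil]
    have := delta_le_Rz v; omega
  | cons x u ih =>
    rw [List.cons_append, Rz_cons, Rz_cons, ih]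
    have h1 := delta_le_Rz u
    have h2 := delta_le_Rz v
    have h3 := Rz_nonneg u
    have h4 := Rz_nonneg v
    cases x <;> simp [List.count_cons, List.count_append] <;> omega

lemma Rz_eq_Lz (S : List Bool) :
    Rz S = Lz S + ((S.count true : ℤ) - S.count false) := by
  induction S with
  | nil => simp [Lz_nil, Rz_nil]
  | cons x S ih =>
    rw [Rz_cons, Lz_cons]
    have h1 := Lz_nonneg S
    cases x <;> simp [List.count_cons] <;> omega

lemma foldr_toNat (l : List ℤ) : (l.map Int.toNat).foldr max 0 = (l.foldr max 0).toNat := by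
  induction l with
  | nil => simp
  | cons a t ih => simp only [List.map_cons, List.foldr_cons, ih]; omega

lemma lval_eq (S : List Bool) : lval S = (Lz S).toNat := by
  unfold lval Lz
  rw [show (fun p : List Bool => p.count false - p.count true)
      = Int.toNat ∘ (fun p : List Bool => ((p.count false : ℤ) - p.count true)) from
    funext fun p => by simp]
  rw [← List.map_map]
  exact foldr_toNat _

lemma rval_eq (S : List Bool) : rval S = (Rz S).toNat := by
  unfold rval Rz
  rw [show (fun s : List Bool => s.count true - s.count false)
      = Int.toNat ∘ (fun s : List Bool => ((s.count true : ℤ) - s.count false)) from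
    funext fun s => by simp]
  rw [← List.map_map]
  exact foldr_toNat _

lemma lval_append (u v : List Bool) : lval (u ++ v) = lval u + (lval v - rval u) := by
  have h1 := Lz_append u v
  have h2 := Rz_eq_Lz u
  have h3 := Lz_nonneg u
  have h4 := Lz_nonneg v
  have h5 := Rz_nonneg u
  rw [lval_eq, lval_eq, lval_eq, rval_eq]
  omega

lemma rval_append (u v : List Bool) : rval (u ++ v) = rval v + (rval u - lval v) := by
  have h1 := Rz_append u v
  have h2 := Rz_eq_Lz v
  have h3 := Rz_nonneg u
  have h4 := Rz_nonneg v
  have h5 := Lz_nonneg v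
  rw [rval_eq, rval_eq, rval_eq, lval_eq]
  omega


/-- **Effect of inserting a single parenthesis between `u` and `v`**
(here `[true] = ⟨` and `[false] = ⟩`; the `−1`'s are truncated natural
subtractions). -/
theorem unmatched_insert_single (u v : List Bool) :
    -- opening parenthesis
    (rval u < lval v →
      lval (u ++ [true] ++ v) = lval (u ++ v) - 1 ∧
      rval (u ++ [true] ++ v) = rval (u ++ v)) ∧
    (lval v ≤ rval u →
      lval (u ++ [true] ++ v) = lval (u ++ v) ∧
      rval (u ++ [true] ++ v) = rval (u ++ v) + 1) ∧
    -- closing parenthesis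
    (rval u ≤ lval v →
      lval (u ++ [false] ++ v) = lval (u ++ v) + 1 ∧
      rval (u ++ [false] ++ v) = rval (u ++ v)) ∧
    (lval v < rval u →
      lval (u ++ [false] ++ v) = lval (u ++ v) ∧
      rval (u ++ [false] ++ v) = rval (u ++ v) - 1) := by
  have t1 : lval [true] = 0 := by decide
  have t2 : rval [true] = 1 := by decide
  have t3 : lval [false] = 1 := by decide
  have t4 : rval [false] = 0 := by decide
  have a1 := lval_append (u ++ [true]) v
  have a2 := rval_append (u ++ [true]) v
  have a3 := lval_append u [true]
  have a4 := rval_append u [true]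
  have b1 := lval_append (u ++ [false]) v
  have b2 := rval_append (u ++ [false]) v
  have b3 := lval_append u [false]
  have b4 := rval_append u [false]
  have c1 := lval_append u v
  have c2 := rval_append u v
  refine ⟨fun h => ⟨?_, ?_⟩, fun h => ⟨?_, ?_⟩, fun h => ⟨?_, ?_⟩, fun h => ⟨?_, ?_⟩⟩ <;> omega
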